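/- arXiv:1611.08498 — 8 statements merged into one kernel-verified Lean document; each statement's English description precedes it below -/
import Mathlib

section
/- Let p, q, r be fixed positive integers with gcd(p,q,r)=1 and let t = gcd(p,q). Let n be a positive integer and let a be the unique integer with 0 ≤ a < t such that t divides n−a. Then the interval I_n = {⌊r(n−a)/(p+q)⌋+1, ..., n} contains no solution (x,y,z) with x,y,z ∈ I_n to the equation p·x + q·y = r·z. -/
/-! Since `gcd(p,q)` divides `p x + q y = r z` and is coprime to `r`, it divides `z`, so
`z ≤ n - a`. Hence `r z ≤ r (n - a)`, whereas `x, y > ⌊r(n-a)/(p+q)⌋` force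
`p x + q y > r (n - a)`. -/

theorem Nat.le_sub_mod_of_dvd_of_le {t z n : ℕ} (htz : t ∣ z) (hzn : z ≤ n) :
    z ≤ n - n % t := by
  rw [← Nat.mul_div_self_eq_mod_sub_self, ← Nat.mul_div_cancel' htz]
  exact Nat.mul_le_mul_left t (Nat.div_le_div_right hzn)

theorem Nat.gcd_dvd_of_mul_add_mul_eq_mul {p q r x y z : ℕ}
    (hgcd : Nat.Coprime (Nat.gcd p q) r) (h : p * x + q * y = r * z) : Nat.gcd p q ∣ z :=
  hgcd.dvd_of_dvd_mul_left <| h ▸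
    Nat.dvd_add ((Nat.gcd_dvd_left p q).mul_right x) ((Nat.gcd_dvd_right p q).mul_right y)

theorem Nat.lt_mul_add_mul_of_div_lt {p q c x y : ℕ} (hpq : 0 < p + q)
    (hx : c / (p + q) < x) (hy : c / (p + q) < y) : c < p * x + q * y :=
  calc c < (c / (p + q) + 1) * (p + q) := (Nat.div_lt_iff_lt_mul hpq).mp (Nat.lt_succ_self _)
    _ = p * (c / (p + q) + 1) + q * (c / (p + q) + 1) := by ring
    _ ≤ p * x + q * y := by gcongr <;> omega

theorem stmt0_general (p q r n : ℕ) (hp : 0 < p)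
    (hgcd : Nat.gcd (Nat.gcd p q) r = 1) :
    ∀ x ∈ Finset.Icc (r * (n - n % Nat.gcd p q) / (p + q) + 1) n,
    ∀ y ∈ Finset.Icc (r * (n - n % Nat.gcd p q) / (p + q) + 1) n,
    ∀ z ∈ Finset.Icc (r * (n - n % Nat.gcd p q) / (p + q) + 1) n,
      p * x + q * y ≠ r * z := by
  intro x hx y hy z hz h
  simp only [Finset.mem_Icc] at hx hy hz
  have hz_le : z ≤ n - n % Nat.gcd p q :=
    Nat.le_sub_mod_of_dvd_of_le (Nat.gcd_dvd_of_mul_add_mul_eq_mul hgcd h) hz.2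
  have hsum : r * (n - n % Nat.gcd p q) < p * x + q * y :=
    Nat.lt_mul_add_mul_of_div_lt (by omega) hx.1 hy.1
  rw [h] at hsum
  exact absurd (Nat.mul_le_mul_left r hz_le) (not_le.mpr hsum)

/-- The interval `I_n = {⌊r(n-a)/(p+q)⌋+1, ..., n}`, where `a = n mod gcd(p,q)`,
contains no solution to `p·x + q·y = r·z`. -/
theorem stmt0 (p q r n : ℕ) (hp : 0 < p) (hq : 0 < q) (hr : 0 < r) (hn : 0 < n)
    (hgcd : Nat.gcd (Nat.gcd p q) r = 1) :
    ∀ x ∈ Finset.Icc (r * (n - n % Nat.gcd p q) / (p + q) + 1) n,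
    ∀ y ∈ Finset.Icc (r * (n - n % Nat.gcd p q) / (p + q) + 1) n,
    ∀ z ∈ Finset.Icc (r * (n - n % Nat.gcd p q) / (p + q) + 1) n,
      p * x + q * y ≠ r * z :=
  stmt0_general p q r n hp hgcd
end

section
/- Let p ≥ q ≥ r be positive integers with gcd(p,q,r)=1 such that q divides p and p+q ≤ rq. Then for every n ≥ 1, the maximum size of a subset of {1,...,n} containing no solution (x,y,z) to px+qy=rz equals ⌈(q−1)n/q⌉. -/
/-!
The multiples of `q` are the obstruction: since `q ∣ p` and `gcd(q, r) = 1`, any solution of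
`px + qy = rz` has `q ∣ z`, so the non-multiples of `q` in `[1, n]` form a solution-free set of
size `n - ⌊n/q⌋ = ⌈(q-1)n/q⌉`.

Conversely, write `p = kq` and let `A` be solution-free; we show by induction on `N` that `A`
misses at least `N` elements of `[1, qN]`. If `qN ∉ A` this is one more missed element. If
`qN ∈ A`, then for every `m ∈ A ∩ [1, N]` the partner `rN - km` cannot lie in `A`, because
`kq·m + q(rN - km) = r·qN`. As `m ↦ rN - km` is injective and lands in `(N, rN]` (this uses
`k < r`, which is `p + q ≤ rq`), these partners together with `[1, N] \ A` give `N` elements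
of `[1, rN] ⊆ [1, qN]` missed by `A`.
-/

open Finset

def SolutionFree (p q r : ℕ) (A : Finset ℕ) : Prop :=
  ∀ x ∈ A, ∀ y ∈ A, ∀ z ∈ A, p * x + q * y ≠ r * z

theorem Nat.sub_one_mul_add_sub_one_div (q n : ℕ) (hq : 0 < q) :
    ((q - 1) * n + q - 1) / q = n - n / q := by
  have hn := Nat.div_add_mod n q
  have hb := Nat.mod_lt n hq
  generalize n / q = a, n % q = b at hn hb
  subst hn
  obtain ⟨s, rfl⟩ : ∃ s, q = s + 1 := ⟨q - 1, by omega⟩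
  rw [Nat.add_sub_cancel, Nat.add_sub_assoc (by omega), Nat.add_sub_cancel,
    Nat.div_eq_of_lt_le (k := s * a + b)] <;> [skip; nlinarith; nlinarith]
  ring_nf
  omega

theorem solutionFree_filter_not_dvd {p q r : ℕ} (hqp : q ∣ p) (hqr : Nat.Coprime q r)
    (s : Finset ℕ) : SolutionFree p q r {x ∈ s | ¬q ∣ x} := by
  intro x _ y _ z hz hxyz
  have hqz : q ∣ r * z := hxyz ▸ dvd_add (dvd_mul_of_dvd_left hqp x) (dvd_mul_right q y)
  exact (mem_filter.1 hz).2 (hqr.dvd_of_dvd_mul_left hqz)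

theorem card_filter_not_dvd_Icc (q n : ℕ) : #{x ∈ Icc 1 n | ¬q ∣ x} = n - n / q := by
  have hsplit := card_filter_add_card_filter_not (s := Icc 1 n) (q ∣ ·)
  rw [show Icc 1 n = Ioc 0 n from Icc_add_one_left_eq_Ioc 0 n, Nat.Ioc_filter_dvd_card_eq_div,
    Nat.card_Ioc] at hsplit
  exact Nat.eq_sub_of_add_eq' hsplit

section UpperBound

variable {k q r : ℕ} {A : Finset ℕ}

theorem SolutionFree.le_card_Icc_sdiff_of_mul_mem (hA : SolutionFree (q * k) q r A)
    (hk : 0 < k) (hkr : k < r) {b : ℕ} (hb : q * b ∈ A) : b ≤ #(Icc 1 (r * b) \ A) := by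
  have hkb : k * b + b ≤ r * b := by nlinarith
  have hkm_le {m : ℕ} (hm : m ∈ Icc 1 b ∩ A) : k * m ≤ k * b :=
    Nat.mul_le_mul_left k (mem_Icc.1 (mem_inter.1 hm).1).2
  have hf_mem : ∀ m ∈ Icc 1 b ∩ A, r * b - k * m ∈ Ioc b (r * b) \ A := by
    intro m hm
    have hkm := hkm_le hm
    obtain ⟨hm, hmA⟩ := mem_inter.1 hm
    have hy : k * m + (r * b - k * m) = r * b := Nat.add_sub_of_le (by omega)
    generalize r * b - k * m = y at hy ⊢
    have hyA : y ∉ A := fun hyA => hA m hmA y hyA (q * b) hb <| by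
      calc q * k * m + q * y = q * (k * m + y) := by ring
        _ = r * (q * b) := by rw [hy]; ring
    have hyb : y ≠ b := by
      rintro rfl
      have hmy : m = y := le_antisymm (mem_Icc.1 hm).2 (Nat.le_of_mul_le_mul_left (by omega) hk)
      exact hyA (hmy ▸ hmA)
    rw [mem_sdiff, mem_Ioc]
    exact ⟨⟨by omega, by omega⟩, hyA⟩
  have hf_inj : Set.InjOn (fun m => r * b - k * m) (Icc 1 b ∩ A : Finset ℕ) := by
    intro m hm m' hm' hmm'
    rw [tsub_right_inj ((hkm_le hm).trans (by omega)) ((hkm_le hm').trans (by omega))] at hmm'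
    exact Nat.eq_of_mul_eq_mul_left hk hmm'
  have hdisj : Disjoint (Icc 1 b \ A) ((Icc 1 b ∩ A).image (fun m => r * b - k * m)) := by
    refine disjoint_left.2 fun x hx hx' => ?_
    obtain ⟨m, hm, rfl⟩ := mem_image.1 hx'
    have := (mem_Icc.1 (mem_sdiff.1 hx).1).2
    have := (mem_Ioc.1 (mem_sdiff.1 (hf_mem m hm)).1).1
    omega
  calc b = #(Icc 1 b \ A) + #(Icc 1 b ∩ A) := by rw [card_sdiff_add_card_inter, Nat.card_Icc]; rfl
    _ = #((Icc 1 b \ A) ∪ (Icc 1 b ∩ A).image (fun m => r * b - k * m)) := by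
      rw [card_union_of_disjoint hdisj, card_image_of_injOn hf_inj]
    _ ≤ #(Icc 1 (r * b) \ A) := by
      refine card_le_card (union_subset ?_ ?_)
      · exact sdiff_subset_sdiff (Icc_subset_Icc_right (by nlinarith)) le_rfl
      · refine (image_subset_iff.2 hf_mem).trans (sdiff_subset_sdiff ?_ le_rfl)
        rw [← Icc_add_one_left_eq_Ioc]
        exact Icc_subset_Icc_left (by omega)

theorem SolutionFree.le_card_Icc_mul_sdiff (hA : SolutionFree (q * k) q r A) (hk : 0 < k)
    (hkr : k < r) (hrq : r ≤ q) (N : ℕ) : N ≤ #(Icc 1 (q * N) \ A) := by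
  induction N with
  | zero => simp
  | succ N ih =>
    by_cases hN : q * (N + 1) ∈ A
    · refine (hA.le_card_Icc_sdiff_of_mul_mem hk hkr hN).trans (card_le_card ?_)
      exact sdiff_subset_sdiff (Icc_subset_Icc_right (Nat.mul_le_mul_right _ hrq)) le_rfl
    · have hnew : q * (N + 1) ∉ Icc 1 (q * N) \ A := fun h => by
        have := (mem_Icc.1 (mem_sdiff.1 h).1).2
        nlinarith
      calc N + 1 ≤ #(insert (q * (N + 1)) (Icc 1 (q * N) \ A)) := by
            rw [card_insert_of_notMem hnew]; omega
        _ ≤ #(Icc 1 (q * (N + 1)) \ A) := by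
          refine card_le_card (insert_subset ?_ ?_)
          · simp only [mem_sdiff, mem_Icc]
            exact ⟨⟨by nlinarith, le_rfl⟩, hN⟩
          · exact sdiff_subset_sdiff (Icc_subset_Icc_right (by nlinarith)) le_rfl

theorem SolutionFree.card_le_sub_div (hA : SolutionFree (q * k) q r A) (hk : 0 < k)
    (hkr : k < r) (hrq : r ≤ q) {n : ℕ} (hAn : A ⊆ Icc 1 n) : #A ≤ n - n / q := by
  have hmissed := hA.le_card_Icc_mul_sdiff hk hkr hrq (n / q)
  have hmono : #(Icc 1 (q * (n / q)) \ A) ≤ #(Icc 1 n \ A) :=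
    card_le_card (sdiff_subset_sdiff (Icc_subset_Icc_right (Nat.mul_div_le n q)) le_rfl)
  have hcompl : #(Icc 1 n \ A) + #A = n := by rw [card_sdiff_add_card_eq_card hAn, Nat.card_Icc]; rfl
  omega

end UpperBound

theorem stmt4_general (p q r : ℕ) (hrq : r ≤ q) (hqp : q ≤ p) (hr : 0 < r)
    (hgcd : Nat.gcd (Nat.gcd p q) r = 1) (hdvd : q ∣ p) (hle : p + q ≤ r * q)
    (n : ℕ) :
    IsGreatest {m : ℕ | ∃ A : Finset ℕ, A ⊆ Finset.Icc 1 n ∧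
      (∀ x ∈ A, ∀ y ∈ A, ∀ z ∈ A, p * x + q * y ≠ r * z) ∧ A.card = m}
      (((q - 1) * n + q - 1) / q) := by
  have hq : 0 < q := hr.trans_le hrq
  have hcop : Nat.Coprime q r := by rwa [Nat.gcd_eq_right hdvd] at hgcd
  obtain ⟨k, rfl⟩ := hdvd
  have hk : 0 < k := Nat.pos_of_ne_zero fun h => by subst h; omega
  have hkr : k < r := Nat.lt_of_mul_lt_mul_left (a := q) (by nlinarith)
  rw [Nat.sub_one_mul_add_sub_one_div q n hq]
  refine ⟨⟨_, filter_subset _ _, solutionFree_filter_not_dvd (dvd_mul_right q k) hcop _,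
    card_filter_not_dvd_Icc q n⟩, ?_⟩
  rintro m ⟨A, hAn, hA, rfl⟩
  exact SolutionFree.card_le_sub_div hA hk hkr hrq hAn

/-- If `q ∣ p` and `p + q ≤ rq`, then the maximum size of a subset of `[n]` with no
solution to `px + qy = rz` equals `⌈(q-1)n/q⌉`. -/
theorem stmt4 (p q r : ℕ) (hrq : r ≤ q) (hqp : q ≤ p) (hr : 0 < r)
    (hgcd : Nat.gcd (Nat.gcd p q) r = 1) (hdvd : q ∣ p) (hle : p + q ≤ r * q)
    (n : ℕ) (hn : 1 ≤ n) :
    IsGreatest {m : ℕ | ∃ A : Finset ℕ, A ⊆ Finset.Icc 1 n ∧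
      (∀ x ∈ A, ∀ y ∈ A, ∀ z ∈ A, p * x + q * y ≠ r * z) ∧ A.card = m}
      (((q - 1) * n + q - 1) / q) :=
  stmt4_general p q r hrq hqp hr hgcd hdvd hle n
end

section
/- Let p ≥ q ≥ r be positive integers with gcd(p,q,r)=1 such that q divides p and p+q ≥ rq. Let a be the unique integer with 0 ≤ a < q such that q divides n−a. Then the maximum size of a subset of {1,...,n} containing no solution (x,y,z) to px+qy=rz equals ⌈(p+q−r)(n−a)/(p+q)⌉ + a. -/
/-!
Write `p = q k` and `n = q m + a` with `0 ≤ a < q`, and put `t = ⌊r m / (k + 1)⌋`; the claimed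
value is `n - t`. Dividing by `q`, a solution of `p x + q y = r z` is a solution of
`k x + y = r w` with `z = q w`. The interval `[t + 1, n]` is free, since there
`k x + y ≥ (k + 1)(t + 1) > r m ≥ r w`. Conversely, if `q z₀` is the largest multiple of `q` in a
free set `A` (with `z₀ ≤ m`), then `A` misses the `m - z₀` larger multiples of `q` up to `q m`,
and it misses at least `⌊r z₀ / (k + 1)⌋` numbers below `r z₀`, because `x` and `r z₀ - k x`
cannot both lie in `A`. Since `r ≤ k + 1`, these are at least `t` missing numbers.
-/

open Finset

def IsLinFree (p q r : ℕ) (A : Finset ℕ) : Prop :=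
  ∀ x ∈ A, ∀ y ∈ A, ∀ z ∈ A, p * x + q * y ≠ r * z

theorem ceil_div_mul_sub_eq (q s r m : ℕ) (hq : 0 < q) (hs : 0 < s) (hr : r ≤ q * s) :
    ((q * s - r) * (q * m) + q * s - 1) / (q * s) = q * m - r * m / s := by
  set t := r * m / s
  have ht₁ : s * t ≤ r * m := Nat.mul_div_le (r * m) s
  have ht₂ : r * m < s * (t + 1) := Nat.lt_mul_div_succ (r * m) hs
  have htm : t ≤ q * m := Nat.div_le_of_le_mul <| by
    rw [← mul_assoc, mul_comm s]; exact Nat.mul_le_mul_right m hr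
  have hqs : 1 ≤ q * s := Nat.mul_pos hq hs
  apply Nat.div_eq_of_lt_le
  · zify [htm, hr, hqs, (by nlinarith : 1 ≤ (q * s - r) * (q * m) + q * s)]
    nlinarith
  · zify [htm, hr, hqs, (by nlinarith : 1 ≤ (q * s - r) * (q * m) + q * s)]
    nlinarith

theorem isLinFree_Icc (q k r n : ℕ) (hq : 0 < q) (hqr : q.Coprime r) :
    IsLinFree (q * k) q r (Icc (r * (n / q) / (k + 1) + 1) n) := by
  intro x hx y hy z hz h
  simp only [mem_Icc] at hx hy hz
  obtain ⟨w, rfl⟩ : q ∣ z := hqr.dvd_of_dvd_mul_left ⟨k * x + y, by rw [← h]; ring⟩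
  have hw : w ≤ n / q := (Nat.le_div_iff_mul_le hq).2 (by rw [mul_comm]; exact hz.2)
  have hsol : k * x + y = r * w := by
    apply Nat.eq_of_mul_eq_mul_left hq
    rw [← mul_left_comm, ← h]
    ring
  have hbig := Nat.lt_mul_div_succ (r * (n / q)) (Nat.succ_pos k)
  have := Nat.mul_le_mul_left k hx.1
  have := Nat.mul_le_mul_left r hw
  linarith

/-- Pairing `x ↔ u - k x` for `x ≤ u / (k + 1)`: each pair meets the complement of `A`, and
the pairs are disjoint except that the pair of `u / (k + 1)` may be a single point. -/
theorem div_succ_le_card_Ico_sdiff (k u : ℕ) (hk : 0 < k) (A : Finset ℕ)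
    (hA : ∀ x ∈ A, ∀ y ∈ A, k * x + y ≠ u) : u / (k + 1) ≤ #(Ico 1 u \ A) := by
  classical
  set v := u / (k + 1)
  have hv : k * v + v ≤ u := by simpa [add_mul, mul_comm] using Nat.mul_div_le u (k + 1)
  have hkv : v ≤ k * v := Nat.le_mul_of_pos_left v hk
  have hkx : ∀ x ∈ Icc 1 v, 1 ≤ k * x ∧ k * x ≤ k * v := fun x hx =>
    ⟨Nat.mul_pos hk (mem_Icc.1 hx).1, Nat.mul_le_mul_left k (mem_Icc.1 hx).2⟩
  let f : ℕ → ℕ := fun x => if x ∈ A then u - k * x else x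
  calc v = #(Icc 1 v) := by simp
    _ ≤ #(Ico 1 u \ A) := by
      refine card_le_card_of_injOn f (fun x hx => ?_) (fun x₁ hx₁ x₂ hx₂ h => ?_)
      · simp only [coe_Icc, Set.mem_Icc, coe_sdiff, coe_Ico, Set.mem_sdiff, Set.mem_Ico,
          mem_coe] at hx ⊢
        have := hkx x (by simpa using hx)
        by_cases hxA : x ∈ A
        · simp only [f, if_pos hxA]
          exact ⟨by omega, fun hy => hA x hxA _ hy (by omega)⟩
        · simp only [f, if_neg hxA]
          exact ⟨by omega, hxA⟩
      · have h₁ := hkx x₁ hx₁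
        have h₂ := hkx x₂ hx₂
        simp only [coe_Icc, Set.mem_Icc] at hx₁ hx₂
        by_cases hA₁ : x₁ ∈ A <;> by_cases hA₂ : x₂ ∈ A <;>
          simp only [f, hA₁, hA₂, if_true, if_false] at h
        · exact Nat.eq_of_mul_eq_mul_left hk (by omega)
        · have : x₁ = v := le_antisymm hx₁.2 (Nat.le_of_mul_le_mul_left (by omega) hk)
          omega
        · have : x₂ = v := le_antisymm hx₂.2 (Nat.le_of_mul_le_mul_left (by omega) hk)
          omega
        · exact h

theorem div_succ_le_sub_add_div_succ {r k m z : ℕ} (hr : r ≤ k + 1) (hz : z ≤ m) :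
    r * m / (k + 1) ≤ m - z + r * z / (k + 1) := by
  have h : r * m ≤ r * z + (k + 1) * (m - z) := by
    obtain ⟨d, rfl⟩ := Nat.exists_eq_add_of_le hz
    simpa [mul_add, add_comm] using Nat.mul_le_mul_right d hr
  calc r * m / (k + 1) ≤ (r * z + (k + 1) * (m - z)) / (k + 1) := Nat.div_le_div_right h
    _ = m - z + r * z / (k + 1) := by rw [Nat.add_mul_div_left _ _ (Nat.succ_pos k), add_comm]

theorem card_le_sub_of_isLinFree (q k r n : ℕ) (hq : 0 < q) (hk : 0 < k) (hrq : r ≤ q)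
    (hrk : r ≤ k + 1) (A : Finset ℕ) (hA : A ⊆ Icc 1 n) (hfree : IsLinFree (q * k) q r A) :
    #A ≤ n - r * (n / q) / (k + 1) := by
  classical
  set m := n / q
  set z₀ := Nat.findGreatest (fun z => q * z ∈ A) m
  have hz₀ : z₀ ≤ m := Nat.findGreatest_le m
  have hqm : q * m ≤ n := Nat.mul_div_le n q
  have hno_sol : ∀ x ∈ A, ∀ y ∈ A, k * x + y ≠ r * z₀ := by
    intro x hx y hy h
    rcases Nat.eq_zero_or_pos z₀ with h0 | h0
    · have := (mem_Icc.1 (hA hy)).1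
      rw [h0] at h
      omega
    · have hz₀A : q * z₀ ∈ A := Nat.findGreatest_of_ne_zero (P := fun z => q * z ∈ A) rfl h0.ne'
      refine hfree x hx y hy (q * z₀) hz₀A ?_
      calc q * k * x + q * y = q * (k * x + y) := by ring
        _ = r * (q * z₀) := by rw [h]; ring
  set low := Ico 1 (r * z₀) \ A
  set high := (Ioc z₀ m).image (q * ·)
  have hlow : low ⊆ Icc 1 n \ A := by
    intro x hx
    simp only [low, mem_sdiff, mem_Ico] at hx
    have : r * z₀ ≤ q * m := Nat.mul_le_mul hrq hz₀
    exact mem_sdiff.2 ⟨mem_Icc.2 ⟨hx.1.1, by omega⟩, hx.2⟩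
  have hhigh : high ⊆ Icc 1 n \ A := by
    intro x hx
    obtain ⟨z, hz, rfl⟩ := mem_image.1 hx
    obtain ⟨hz₁, hz₂⟩ := mem_Ioc.1 hz
    have hzA : q * z ∉ A := Nat.findGreatest_is_greatest (P := fun z => q * z ∈ A) hz₁ hz₂
    exact mem_sdiff.2
      ⟨mem_Icc.2 ⟨Nat.mul_pos hq (by omega), (Nat.mul_le_mul_left q hz₂).trans hqm⟩, hzA⟩
  have hdisj : Disjoint low high := by
    refine disjoint_left.2 fun x hxl hxh => ?_
    obtain ⟨z, hz, rfl⟩ := mem_image.1 hxh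
    have h₁ := (mem_Ico.1 (mem_sdiff.1 hxl).1).2
    have h₂ : r * z₀ ≤ q * z := Nat.mul_le_mul hrq (mem_Ioc.1 hz).1.le
    omega
  have hcard : #(Icc 1 n \ A) + #A = n := by
    simpa using card_sdiff_add_card_eq_card hA
  have hmiss : r * z₀ / (k + 1) + (m - z₀) ≤ #(Icc 1 n \ A) :=
    calc r * z₀ / (k + 1) + (m - z₀) ≤ #low + #high := by
          rw [card_image_of_injective _ (mul_right_injective₀ hq.ne'), Nat.card_Ioc]
          exact Nat.add_le_add_right (div_succ_le_card_Ico_sdiff k _ hk A hno_sol) _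
      _ = #(low ∪ high) := (card_union_of_disjoint hdisj).symm
      _ ≤ #(Icc 1 n \ A) := card_le_card (union_subset hlow hhigh)
  have := div_succ_le_sub_add_div_succ hrk hz₀
  omega

theorem stmt5_general (p q r : ℕ) (hrq : r ≤ q) (hqp : q ≤ p) (hr : 0 < r)
    (hgcd : Nat.gcd (Nat.gcd p q) r = 1) (hdvd : q ∣ p) (hge : r * q ≤ p + q)
    (n : ℕ) :
    IsGreatest {m : ℕ | ∃ A : Finset ℕ, A ⊆ Finset.Icc 1 n ∧
      (∀ x ∈ A, ∀ y ∈ A, ∀ z ∈ A, p * x + q * y ≠ r * z) ∧ A.card = m}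
      (((p + q - r) * (n - n % q) + (p + q) - 1) / (p + q) + n % q) := by
  obtain ⟨k, rfl⟩ := hdvd
  have hq : 0 < q := hr.trans_le hrq
  have hk : 0 < k := Nat.pos_of_ne_zero (by rintro rfl; omega)
  have hrk : r ≤ k + 1 := Nat.le_of_mul_le_mul_right (by linarith) hq
  have hqr : q.Coprime r := by rwa [Nat.gcd_eq_right (dvd_mul_right q k)] at hgcd
  have hvalue : ((q * k + q - r) * (n - n % q) + (q * k + q) - 1) / (q * k + q) + n % q
      = n - r * (n / q) / (k + 1) := by
    have hn : q * (n / q) + n % q = n := Nat.div_add_mod n q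
    have ht : r * (n / q) / (k + 1) ≤ q * (n / q) :=
      (Nat.div_le_of_le_mul (Nat.mul_le_mul_right _ hrk)).trans (Nat.le_mul_of_pos_left _ hq)
    rw [show q * k + q = q * (k + 1) by ring, Nat.sub_eq_of_eq_add hn.symm,
      ceil_div_mul_sub_eq q (k + 1) r (n / q) hq k.succ_pos (by nlinarith)]
    omega
  rw [hvalue]
  refine ⟨⟨_, Icc_subset_Icc (Nat.le_add_left 1 _) le_rfl, isLinFree_Icc q k r n hq hqr, by simp⟩,
    ?_⟩
  rintro _ ⟨A, hA, hfree, rfl⟩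
  exact card_le_sub_of_isLinFree q k r n hq hk hrq hrk A hA hfree

/-- If `q ∣ p` and `p + q ≥ rq`, then the maximum size of a subset of `[n]` with no
solution to `px + qy = rz` equals `⌈(p+q-r)(n-a)/(p+q)⌉ + a`, where `a = n mod q`. -/
theorem stmt5 (p q r : ℕ) (hrq : r ≤ q) (hqp : q ≤ p) (hr : 0 < r)
    (hgcd : Nat.gcd (Nat.gcd p q) r = 1) (hdvd : q ∣ p) (hge : r * q ≤ p + q)
    (n : ℕ) (hn : 1 ≤ n) :
    IsGreatest {m : ℕ | ∃ A : Finset ℕ, A ⊆ Finset.Icc 1 n ∧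
      (∀ x ∈ A, ∀ y ∈ A, ∀ z ∈ A, p * x + q * y ≠ r * z) ∧ A.card = m}
      (((p + q - r) * (n - n % q) + (p + q) - 1) / (p + q) + n % q) :=
  stmt5_general p q r hrq hqp hr hgcd hdvd hge n
end

section
/- Let p ≥ q ≥ r be positive integers with gcd(p,q,r)=1, t = gcd(p,q), r₁ = p/t, r₂ = q/t. Let S ⊆ {1,...,n} be a set containing no solution (x,y,z) to px+qy=rz, and suppose M is the largest element of S divisible by t. Then |S| ≤ M − ⌊rM/(r₂(p+q))⌋ − (r₁r₂ − r₁ − r₂ + 1)·⌊⌊rM/(r₁(p+q)) − 1/r₂⌋/(r₁r₂)⌋ + ⌈(n−M)(t−1)/t⌉. -/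
/-!
Write `p = t r₁`, `q = t r₂` and `M = t M₀`. The integer solutions of `r₁ x + r₂ y = r M₀` lie on
a line `(x₀ + i r₂, y₀ - i r₁)`, and for every solution with `1 ≤ x, y ≤ M` one of `x, y` is
missing from `S` (take `z = M`). Choosing a missing coordinate for each index `i` is injective on
two kinds of indices: the first `⌊r M₀ / (r₂ (r₁ + r₂))⌋` ones, where `x ≤ y`, and later ones
whose `x` is not `≡ y₀ (mod r₁)` and whose `y` is not `≡ x₀ (mod r₂)`, so that neither
coordinate is a coordinate of another solution. By the Chinese remainder theorem each block of
`r₁ r₂` consecutive indices contains `(r₁ - 1)(r₂ - 1)` indices of the second kind. Above `M`,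
`S` misses every multiple of `t`.
-/

open Finset

namespace Int

theorem card_Ico_filter_modEq_add_mul (a v m k : ℤ) (hm : 0 < m) :
    (#{x ∈ Ico a (a + m * k) | x ≡ v [ZMOD m]} : ℤ) = max k 0 := by
  have hm' : (m : ℚ) ≠ 0 := by exact_mod_cast hm.ne'
  rw [Ico_filter_modEq_card _ _ hm]
  push_cast
  rw [show ((a : ℚ) + m * k - v) / m = (a - v) / m + (k : ℤ) by field_simp; ring,
    ceil_add_intCast, add_sub_cancel_left]

theorem exists_modEq_iff_of_isCoprime {b m : ℤ} (h : IsCoprime b m) (a c : ℤ) :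
    ∃ α, ∀ i, a + i * b ≡ c [ZMOD m] ↔ i ≡ α [ZMOD m] := by
  obtain ⟨u, v, huv⟩ := h
  refine ⟨u * (c - a), fun i => ?_⟩
  simp only [modEq_iff_dvd]
  constructor
  · rintro ⟨e, he⟩
    exact ⟨u * e - i * v, by linear_combination u * he + i * huv⟩
  · rintro ⟨e, he⟩
    exact ⟨b * e + (c - a) * v, by linear_combination b * he - (c - a) * huv⟩

theorem exists_modEq_and_modEq_iff {m₁ m₂ : ℤ} (h : IsCoprime m₁ m₂) (α₁ α₂ : ℤ) :
    ∃ β, ∀ x, x ≡ α₁ [ZMOD m₁] ∧ x ≡ α₂ [ZMOD m₂] ↔ x ≡ β [ZMOD m₁ * m₂] := by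
  obtain ⟨u, v, huv⟩ := h
  have h₁ : α₁ * (v * m₂) + α₂ * (u * m₁) ≡ α₁ [ZMOD m₁] :=
    modEq_iff_dvd.mpr ⟨u * (α₁ - α₂), by linear_combination -α₁ * huv⟩
  have h₂ : α₁ * (v * m₂) + α₂ * (u * m₁) ≡ α₂ [ZMOD m₂] :=
    modEq_iff_dvd.mpr ⟨v * (α₂ - α₁), by linear_combination -α₂ * huv⟩
  refine ⟨α₁ * (v * m₂) + α₂ * (u * m₁), fun x => ?_⟩
  rw [← modEq_and_modEq_iff_modEq_mul (isCoprime_iff_gcd_eq_one.mp ⟨u, v, huv⟩)]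
  exact and_congr ⟨fun hx => hx.trans h₁.symm, fun hx => hx.trans h₁⟩
    ⟨fun hx => hx.trans h₂.symm, fun hx => hx.trans h₂⟩

theorem card_Ico_filter_not_modEq_and_not_modEq {m₁ m₂ : ℤ} (hm₁ : 0 < m₁) (hm₂ : 0 < m₂)
    (h : IsCoprime m₁ m₂) (a α₁ α₂ : ℤ) (k : ℕ) :
    (#{x ∈ Ico a (a + m₁ * m₂ * k) | ¬x ≡ α₁ [ZMOD m₁] ∧ ¬x ≡ α₂ [ZMOD m₂]} : ℤ) =
      (m₁ - 1) * (m₂ - 1) * k := by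
  obtain ⟨β, hβ⟩ := exists_modEq_and_modEq_iff h α₁ α₂
  have hI : (#(Ico a (a + m₁ * m₂ * k)) : ℤ) = m₁ * m₂ * k := by
    rw [card_Ico, add_sub_cancel_left, toNat_of_nonneg (by positivity)]
  have h₁ : (#{x ∈ Ico a (a + m₁ * m₂ * k) | x ≡ α₁ [ZMOD m₁]} : ℤ) = m₂ * k := by
    rw [mul_assoc, card_Ico_filter_modEq_add_mul _ _ _ _ hm₁, max_eq_left (by positivity)]
  have h₂ : (#{x ∈ Ico a (a + m₁ * m₂ * k) | x ≡ α₂ [ZMOD m₂]} : ℤ) = m₁ * k := by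
    rw [mul_comm m₁, mul_assoc, card_Ico_filter_modEq_add_mul _ _ _ _ hm₂,
      max_eq_left (by positivity)]
  have h₁₂ :
      (#{x ∈ Ico a (a + m₁ * m₂ * k) | x ≡ α₁ [ZMOD m₁] ∧ x ≡ α₂ [ZMOD m₂]} : ℤ) = k := by
    simp_rw [hβ]
    rw [card_Ico_filter_modEq_add_mul _ _ _ _ (by positivity), max_eq_left (by positivity)]
  have hunion := card_union_add_card_inter {x ∈ Ico a (a + m₁ * m₂ * k) | x ≡ α₁ [ZMOD m₁]}
    {x ∈ Ico a (a + m₁ * m₂ * k) | x ≡ α₂ [ZMOD m₂]}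
  have hsplit := card_filter_add_card_filter_not
    (fun x => x ≡ α₁ [ZMOD m₁] ∨ x ≡ α₂ [ZMOD m₂]) (s := Ico a (a + m₁ * m₂ * k))
  rw [← filter_or, ← filter_and] at hunion
  simp only [not_or] at hsplit
  zify at hunion hsplit
  linarith

theorem exists_mul_add_mul_eq_of_isCoprime {a b : ℤ} (h : IsCoprime a b) (hb : 0 < b) (N : ℤ) :
    ∃ x y, a * x + b * y = N ∧ 1 ≤ x ∧ x ≤ b := by
  obtain ⟨u, v, huv⟩ := h
  refine ⟨(u * N - 1) % b + 1, v * N + a * ((u * N - 1) / b), ?_, ?_, ?_⟩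
  · linear_combination N * huv + a * emod_add_mul_ediv (u * N - 1) b
  · linarith [emod_nonneg (u * N - 1) hb.ne']
  · linarith [emod_lt_of_pos (u * N - 1) hb]

theorem add_mul_mem_Icc_and_sub_mul_mem_Icc {r₁ r₂ x₀ y₀ N M i : ℤ} (hr₁ : 0 < r₁)
    (hr₂ : 0 < r₂) (hsol : r₁ * x₀ + r₂ * y₀ = N) (hx₀ : 1 ≤ x₀) (hx₀r : x₀ ≤ r₂) (hi : 0 ≤ i)
    (hiN : r₁ * r₂ * (i + 1) < N) (hN₁ : N ≤ r₁ * M) (hN₂ : N ≤ r₂ * M) :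
    x₀ + i * r₂ ∈ Icc 1 M ∧ y₀ - i * r₁ ∈ Icc 1 M := by
  have hx : 0 < x₀ + i * r₂ := by nlinarith
  have hy : 0 < y₀ - i * r₁ := by
    have : r₁ * (x₀ + i * r₂) < N := by nlinarith [mul_le_mul_of_nonneg_left hx₀r hr₁.le]
    exact pos_of_mul_pos_right (show 0 < r₂ * (y₀ - i * r₁) by linarith) hr₂.le
  simp only [mem_Icc]
  refine ⟨⟨hx, le_of_mul_le_mul_left ?_ hr₁⟩, ⟨hy, le_of_mul_le_mul_left ?_ hr₂⟩⟩ <;>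
    nlinarith [mul_pos hr₁ hx, mul_pos hr₂ hy]

theorem eq_of_add_mul_eq_sub_mul {a b x₀ y₀ i i' : ℤ} (ha : 0 < a) (hb : 0 < b)
    (hi : x₀ + i * a ≤ y₀ - i * b) (hi' : x₀ + i' * a ≤ y₀ - i' * b)
    (h : x₀ + i * a = y₀ - i' * b) : i = i' := by
  rcases lt_trichotomy i i' with hlt | heq | hgt
  · nlinarith [mul_le_mul_of_nonneg_right (show i + 1 ≤ i' by omega) ha.le]
  · exact heq
  · nlinarith [mul_le_mul_of_nonneg_right (show i' + 1 ≤ i by omega) hb.le]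

end Int

theorem Finset.card_le_card_sdiff_of_pairs {ι α : Type*} [DecidableEq α] {J : Finset ι}
    {U T : Finset α} {X Y : ι → α} (hX : ∀ i ∈ J, X i ∈ U) (hY : ∀ i ∈ J, Y i ∈ U)
    (hXY : ∀ i ∈ J, X i ∈ T → Y i ∉ T) (hXinj : Set.InjOn X J) (hYinj : Set.InjOn Y J)
    (hcross : ∀ i ∈ J, ∀ i' ∈ J, X i = Y i' → i = i') :
    #J ≤ #(U \ T) := by
  refine card_le_card_of_injOn (fun i => if X i ∈ T then Y i else X i) (fun i hi => ?_) ?_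
  · dsimp only
    split_ifs with h
    exacts [mem_sdiff.2 ⟨hY i hi, hXY i hi h⟩, mem_sdiff.2 ⟨hX i hi, h⟩]
  · intro i hi i' hi' he
    dsimp only at he
    split_ifs at he
    · exact hYinj hi hi' he
    · exact (hcross i' hi' i hi he.symm).symm
    · exact hcross i hi i' hi' he
    · exact hXinj hi hi' he

theorem le_card_Icc_sdiff_of_forall_mul_add_mul_ne {r₁ r₂ N M : ℤ} (hr₁ : 0 < r₁)
    (hr₂ : 0 < r₂) (hcop : IsCoprime r₁ r₂) (hN₁ : N ≤ r₁ * M) (hN₂ : N ≤ r₂ * M) (A k : ℕ)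
    (hA : r₂ * (r₁ + r₂) * A ≤ N) (hk : r₁ * r₂ * (A + r₁ * r₂ * k) < N) (S : Finset ℤ)
    (hfree : ∀ x ∈ S, ∀ y ∈ S, r₁ * x + r₂ * y ≠ N) :
    (A : ℤ) + (r₁ - 1) * (r₂ - 1) * k ≤ #(Icc 1 M \ S) := by
  obtain ⟨x₀, y₀, hsol, hx₀, hx₀r⟩ := Int.exists_mul_add_mul_eq_of_isCoprime hcop hr₂ N
  -- `i ≡ α₁ [ZMOD r₁]` iff the `x` of solution `i` is congruent mod `r₁` to every `y`, and
  -- symmetrically for `α₂`.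
  obtain ⟨α₁, hα₁⟩ := Int.exists_modEq_iff_of_isCoprime hcop.symm x₀ y₀
  obtain ⟨α₂, hα₂⟩ := Int.exists_modEq_iff_of_isCoprime hcop.neg_left y₀ x₀
  simp only [mul_neg, ← sub_eq_add_neg] at hα₂
  set JA := Ico 0 (A : ℤ)
  set JE := {i ∈ Ico (A : ℤ) (A + r₁ * r₂ * k) | ¬i ≡ α₁ [ZMOD r₁] ∧ ¬i ≡ α₂ [ZMOD r₂]}
  have hsolJ (i : ℤ) : r₁ * (x₀ + i * r₂) + r₂ * (y₀ - i * r₁) = N := by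
    linear_combination hsol
  have hmem (i : ℤ) (hi : i ∈ JA ∪ JE) : x₀ + i * r₂ ∈ Icc 1 M ∧ y₀ - i * r₁ ∈ Icc 1 M := by
    have hi' : 0 ≤ i ∧ i + 1 ≤ A + r₁ * r₂ * k := by
      simp only [JA, JE, mem_union, mem_Ico, mem_filter] at hi
      have : (0 : ℤ) ≤ r₁ * r₂ * k := by positivity
      omega
    refine Int.add_mul_mem_Icc_and_sub_mul_mem_Icc hr₁ hr₂ hsol hx₀ hx₀r hi'.1 ?_ hN₁ hN₂
    nlinarith [mul_le_mul_of_nonneg_left hi'.2 (mul_pos hr₁ hr₂).le]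
  have hle (i : ℤ) (hi : i ∈ JA) : x₀ + i * r₂ ≤ y₀ - i * r₁ := by
    simp only [JA, mem_Ico] at hi
    have h : (r₁ + r₂) * (x₀ + i * r₂) ≤ N := by
      nlinarith [mul_le_mul_of_nonneg_left (show i + 1 ≤ A by omega) hr₂.le]
    exact le_of_mul_le_mul_left (by linarith [hsolJ i]) hr₂
  have hcross (i : ℤ) (hi : i ∈ JA ∪ JE) (i' : ℤ) (hi' : i' ∈ JA ∪ JE)
      (h : x₀ + i * r₂ = y₀ - i' * r₁) : i = i' := by
    by_cases hiE : i ∈ JE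
    · have : x₀ + i * r₂ ≡ y₀ [ZMOD r₁] := h ▸ Int.modEq_iff_dvd.2 ⟨i', by ring⟩
      exact absurd ((hα₁ i).1 this) (mem_filter.1 hiE).2.1
    by_cases hi'E : i' ∈ JE
    · have : y₀ - i' * r₁ ≡ x₀ [ZMOD r₂] := h ▸ Int.modEq_iff_dvd.2 ⟨-i, by ring⟩
      exact absurd ((hα₂ i').1 this) (mem_filter.1 hi'E).2.2
    exact Int.eq_of_add_mul_eq_sub_mul hr₂ hr₁ (hle i ((mem_union.1 hi).resolve_right hiE))
      (hle i' ((mem_union.1 hi').resolve_right hi'E)) h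
  have hJ := card_le_card_sdiff_of_pairs (T := S) (fun i hi => (hmem i hi).1)
    (fun i hi => (hmem i hi).2) (fun i _ hx hy => hfree _ hx _ hy (hsolJ i))
    (fun i _ i' _ h => by simpa [hr₂.ne'] using h) (fun i _ i' _ h => by simpa [hr₁.ne'] using h)
    hcross
  have hdisj : Disjoint JA JE :=
    disjoint_of_subset_right (filter_subset _ _) (Ico_disjoint_Ico_consecutive _ _ _)
  rw [card_union_of_disjoint hdisj, Int.card_Ico, sub_zero, Int.toNat_natCast] at hJ
  have hJE := Int.card_Ico_filter_not_modEq_and_not_modEq hr₁ hr₂ hcop A α₁ α₂ k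
  linarith

theorem Nat.card_Ioc_filter_dvd_of_dvd {t M n : ℕ} (htM : t ∣ M) (hMn : M ≤ n) :
    #{x ∈ Ioc M n | t ∣ x} = (n - M) / t := by
  have hIoc : Ioc M n = (Ioc 0 (n - M)).map (addRightEmbedding M) := by
    rw [map_add_right_Ioc, zero_add, Nat.sub_add_cancel hMn]
  rw [hIoc, filter_map, card_map, ← Nat.Ioc_filter_dvd_card_eq_div]
  exact congrArg card (filter_congr fun x _ => Nat.dvd_add_left htM)

theorem card_add_card_Icc_sdiff_add_div_le {S : Finset ℕ} {t M n : ℕ} (hS : S ⊆ Icc 1 n)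
    (hMn : M ≤ n) (htM : t ∣ M) (hmax : ∀ x ∈ S, t ∣ x → x ≤ M) :
    #S + #(Icc 1 M \ S) + (n - M) / t ≤ n := by
  have hdisj : Disjoint (S ∪ Icc 1 M) {x ∈ Ioc M n | t ∣ x} := by
    simp only [disjoint_left, mem_union, mem_Icc, mem_filter, mem_Ioc]
    rintro x (hx | hx) ⟨⟨hMx, -⟩, htx⟩
    · exact absurd (hmax x hx htx) (not_le.2 hMx)
    · omega
  have hsub : S ∪ Icc 1 M ∪ {x ∈ Ioc M n | t ∣ x} ⊆ Icc 1 n := by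
    refine union_subset (union_subset hS (Icc_subset_Icc_right hMn)) fun x hx => ?_
    simp only [mem_filter, mem_Ioc, mem_Icc] at hx ⊢
    omega
  have := card_le_card hsub
  rwa [card_union_of_disjoint hdisj, ← union_sdiff_self_eq_union,
    card_union_of_disjoint disjoint_sdiff, Nat.card_Ioc_filter_dvd_of_dvd htM hMn,
    Nat.card_Icc, Nat.add_sub_cancel] at this

theorem card_Icc_sdiff_map_castEmbedding (a b : ℕ) (S : Finset ℕ) :
    #(Icc (a : ℤ) b \ S.map Nat.castEmbedding) = #(Icc a b \ S) := by
  have : Icc (a : ℤ) b = (Icc a b).map Nat.castEmbedding := by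
    rw [← coe_inj, coe_map, coe_Icc, coe_Icc]
    exact (Nat.image_cast_int_Icc a b).symm
  rw [this, ← Finset.map_sdiff, card_map]

theorem Int.ceil_natCast_mul_sub_one_div {t : ℕ} (ht : 0 < t) (m : ℕ) :
    ⌈(m : ℚ) * ((t : ℚ) - 1) / t⌉ = m - (m / t : ℕ) := by
  have ht' : (t : ℚ) ≠ 0 := by positivity
  rw [show (m : ℚ) * ((t : ℚ) - 1) / t = ((m : ℤ) : ℚ) + -((m : ℚ) / t) by
      field_simp; push_cast; ring,
    ceil_intCast_add, ceil_neg, Rat.floor_natCast_div_natCast]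
  push_cast
  ring

/-- The paper's number of CRT blocks satisfies the hypothesis `hk` of
`le_card_Icc_sdiff_of_forall_mul_add_mul_ne`. -/
theorem mul_mul_add_toNat_fdiv_floor_lt {r₁ r₂ N A : ℤ} (hr₁ : 0 < r₁) (hr₂ : 0 < r₂)
    (hN : 0 < N) (hA : r₂ * (r₁ + r₂) * A ≤ N) :
    r₁ * r₂ * (A + r₁ * r₂ *
      (Int.fdiv ⌊(N : ℚ) / (r₁ * (r₁ + r₂)) - 1 / r₂⌋ (r₁ * r₂)).toNat) < N := by
  set F := ⌊(N : ℚ) / (r₁ * (r₁ + r₂)) - 1 / r₂⌋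
  have hc : (r₁ + r₂) * (r₁ * r₂) * (r₁ * r₂ * (F.fdiv (r₁ * r₂)).toNat) < r₂ * N := by
    rcases le_or_gt (F.fdiv (r₁ * r₂)) 0 with h | h
    · rw [Int.toNat_of_nonpos h]
      simpa using mul_pos hr₂ hN
    rw [Int.fdiv_eq_ediv_of_nonneg _ (by positivity)] at h ⊢
    rw [Int.toNat_of_nonneg h.le]
    have hF : (F / (r₁ * r₂)) * (r₁ * r₂) ≤ F := Int.ediv_mul_le _ (by positivity)
    have hFQ : ((F : ℤ) : ℚ) * (r₁ * (r₁ + r₂) * r₂) ≤ r₂ * N - r₁ * (r₁ + r₂) := by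
      have := Int.floor_le ((N : ℚ) / (r₁ * (r₁ + r₂)) - 1 / r₂)
      rw [← le_div_iff₀ (by positivity)]
      convert this using 1
      field_simp
    have hFZ : F * (r₁ * (r₁ + r₂) * r₂) ≤ r₂ * N - r₁ * (r₁ + r₂) := by exact_mod_cast hFQ
    nlinarith [mul_le_mul_of_nonneg_left hF (by positivity : (0 : ℤ) ≤ (r₁ + r₂) * (r₁ * r₂)),
      mul_pos hr₁ (add_pos hr₁ hr₂)]
  nlinarith

theorem card_le_of_forall_mul_add_mul_ne {r₁ r₂ N M n t : ℕ} (hr₁ : 0 < r₁) (hr₂ : 0 < r₂)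
    (hcop : r₁.Coprime r₂) (hN : 0 < N) (hN₁ : N ≤ r₁ * M) (hN₂ : N ≤ r₂ * M) {S : Finset ℕ}
    (hS : S ⊆ Icc 1 n) (hMn : M ≤ n) (htM : t ∣ M) (hmax : ∀ x ∈ S, t ∣ x → x ≤ M)
    (hfree : ∀ x ∈ S, ∀ y ∈ S, r₁ * x + r₂ * y ≠ N) :
    (#S : ℤ) ≤ M - (N / (r₂ * (r₁ + r₂)) : ℕ) - ((r₁ : ℤ) - 1) * (r₂ - 1) *
      Int.fdiv ⌊(N : ℚ) / (r₁ * (r₁ + r₂)) - 1 / r₂⌋ (r₁ * r₂) + (n - M - ((n - M) / t : ℕ)) := by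
  have hA : (r₂ : ℤ) * (r₁ + r₂) * (N / (r₂ * (r₁ + r₂)) : ℕ) ≤ N := by
    exact_mod_cast (Nat.div_mul_le_self N _).trans_eq' (mul_comm _ _)
  have hfree' : ∀ x ∈ S.map Nat.castEmbedding, ∀ y ∈ S.map Nat.castEmbedding,
      (r₁ : ℤ) * x + r₂ * y ≠ N := by
    simp only [mem_map, Nat.castEmbedding_apply]
    rintro _ ⟨x, hx, rfl⟩ _ ⟨y, hy, rfl⟩
    exact_mod_cast hfree x hx y hy
  have hcore := le_card_Icc_sdiff_of_forall_mul_add_mul_ne (M := M) (by positivity)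
    (by positivity) (Nat.isCoprime_iff_coprime.2 hcop) (by exact_mod_cast hN₁)
    (by exact_mod_cast hN₂) _ _ hA
    (mul_mul_add_toNat_fdiv_floor_lt (by positivity) (by positivity) (by positivity) hA) _ hfree'
  rw [← Nat.cast_one, card_Icc_sdiff_map_castEmbedding] at hcore
  have hcount : (#S : ℤ) + #(Icc 1 M \ S) + ((n - M) / t : ℕ) ≤ n := by
    exact_mod_cast card_add_card_Icc_sdiff_add_div_le hS hMn htM hmax
  have hfdiv := mul_le_mul_of_nonneg_left
    (Int.self_le_toNat (Int.fdiv ⌊(N : ℚ) / (r₁ * (r₁ + r₂)) - 1 / r₂⌋ (r₁ * r₂)))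
    (mul_nonneg (by omega : (0 : ℤ) ≤ r₁ - 1) (by omega : (0 : ℤ) ≤ r₂ - 1))
  push_cast at hcore hfdiv hcount ⊢
  linarith

theorem stmt9_general (p q r n M t r₁ r₂ : ℕ) (hqp : q ≤ p) (hrq : r ≤ q) (hr : 0 < r)
    (ht : t = Nat.gcd p q)
    (hr1 : r₁ = p / t) (hr2 : r₂ = q / t)
    (S : Finset ℕ) (hS : S ⊆ Finset.Icc 1 n)
    (hfree : ∀ x ∈ S, ∀ y ∈ S, ∀ z ∈ S, p * x + q * y ≠ r * z)
    (hM : M ∈ S) (htM : t ∣ M) (hMmax : ∀ x ∈ S, t ∣ x → x ≤ M) :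
    (S.card : ℤ) ≤ (M : ℤ) - (r * M / (r₂ * (p + q)) : ℕ) -
        ((r₁ : ℤ) * r₂ - r₁ - r₂ + 1) *
          Int.fdiv ⌊(r * M : ℚ) / (r₁ * (p + q)) - 1 / r₂⌋ (r₁ * r₂) +
        ⌈(((n : ℚ) - M) * ((t : ℚ) - 1)) / t⌉ := by
  have ht0 : 0 < t := ht ▸ Nat.gcd_pos_of_pos_right p (hr.trans_le hrq)
  have hp : p = t * r₁ := by rw [hr1, Nat.mul_div_cancel' (ht ▸ Nat.gcd_dvd_left p q)]
  have hq : q = t * r₂ := by rw [hr2, Nat.mul_div_cancel' (ht ▸ Nat.gcd_dvd_right p q)]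
  obtain ⟨M₀, hM₀⟩ := id htM
  have hMI : 1 ≤ M ∧ M ≤ n := mem_Icc.1 (hS hM)
  have hA : r * M / (r₂ * (p + q)) = r * M₀ / (r₂ * (r₁ + r₂)) := by
    rw [hM₀, hp, hq, show r * (t * M₀) = t * (r * M₀) by ring,
      show r₂ * (t * r₁ + t * r₂) = t * (r₂ * (r₁ + r₂)) by ring, Nat.mul_div_mul_left _ _ ht0]
  have hF : (r * M : ℚ) / (r₁ * (p + q)) - 1 / r₂ =
      ((r * M₀ : ℕ) : ℚ) / (r₁ * (r₁ + r₂)) - 1 / r₂ := by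
    rw [hM₀, hp, hq]
    push_cast
    field_simp
  have hbound := card_le_of_forall_mul_add_mul_ne (N := r * M₀) (t := t)
    (Nat.pos_of_mul_pos_left (hp ▸ hr.trans_le (hrq.trans hqp)))
    (Nat.pos_of_mul_pos_left (hq ▸ hr.trans_le hrq))
    (hr1 ▸ hr2 ▸ ht ▸ Nat.coprime_div_gcd_div_gcd (ht ▸ ht0))
    (Nat.mul_pos hr (Nat.pos_of_mul_pos_left (hM₀ ▸ hMI.1)))
    (by rw [hM₀, ← mul_assoc, mul_comm r₁, ← hp]; exact Nat.mul_le_mul_right _ (hrq.trans hqp))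
    (by rw [hM₀, ← mul_assoc, mul_comm r₂, ← hq]; exact Nat.mul_le_mul_right _ hrq)
    hS hMI.2 htM hMmax
    (fun x hx y hy h => hfree x hx y hy M hM (by rw [hp, hq, hM₀, mul_left_comm r, ← h]; ring))
  rw [hA, hF, ← Nat.cast_sub hMI.2, Int.ceil_natCast_mul_sub_one_div ht0, Nat.cast_sub hMI.2]
  linarith

/-- If `S ⊆ [n]` is free of solutions to `px + qy = rz` and `M` is the largest element
of `S` divisible by `t = gcd(p,q)`, then
`|S| ≤ M - ⌊rM/(r₂(p+q))⌋ - (r₁r₂-r₁-r₂+1)·⌊⌊rM/(r₁(p+q)) - 1/r₂⌋/(r₁r₂)⌋ + ⌈(n-M)(t-1)/t⌉`. -/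
theorem stmt9 (p q r n M t r₁ r₂ : ℕ) (hqp : q ≤ p) (hrq : r ≤ q) (hr : 0 < r)
    (hgcd : Nat.gcd (Nat.gcd p q) r = 1) (ht : t = Nat.gcd p q)
    (hr1 : r₁ = p / t) (hr2 : r₂ = q / t)
    (S : Finset ℕ) (hS : S ⊆ Finset.Icc 1 n)
    (hfree : ∀ x ∈ S, ∀ y ∈ S, ∀ z ∈ S, p * x + q * y ≠ r * z)
    (hM : M ∈ S) (htM : t ∣ M) (hMmax : ∀ x ∈ S, t ∣ x → x ≤ M) :
    (S.card : ℤ) ≤ (M : ℤ) - (r * M / (r₂ * (p + q)) : ℕ) -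
        ((r₁ : ℤ) * r₂ - r₁ - r₂ + 1) *
          Int.fdiv ⌊(r * M : ℚ) / (r₁ * (p + q)) - 1 / r₂⌋ (r₁ * r₂) +
        ⌈(((n : ℚ) - M) * ((t : ℚ) - 1)) / t⌉ :=
  stmt9_general p q r n M t r₁ r₂ hqp hrq hr ht hr1 hr2 S hS hfree hM htM hMmax
end

section
/- Let p ≥ q ≥ t be positive integers with t = gcd(p,q), and define C := 1 − (t/(p+q))·((p² + (p−t)(q−t))/p²). Then 1/2 ≤ C ≤ 1 − t/(p+q). Moreover, if q does not divide p then C > 1/2, and if q divides p then C = p/(p+q). -/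
/-! When `q ∣ p` we have `t = q`, the factor `(p - t)(q - t)` vanishes and `C = p/(p+q)`.
Otherwise `t` is a proper divisor of `q`, so `2t ≤ q < p`, and then
`p²(p + q - 2t) ≥ p³ > q(p - t)(q - t) ≥ 2t(p - t)(q - t)`, which is `C > 1/2` after clearing
denominators. The upper bound only needs `(p - t)(q - t) ≥ 0`. -/

section Field

variable {K : Type*} [Field K]

def solFreeConst (p q t : K) : K :=
  1 - t / (p + q) * ((p ^ 2 + (p - t) * (q - t)) / p ^ 2)

lemma solFreeConst_self_right {p q : K} (hp : p ≠ 0) (hpq : p + q ≠ 0) :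
    solFreeConst p q q = p / (p + q) := by
  unfold solFreeConst
  field_simp
  ring

variable [LinearOrder K] [IsStrictOrderedRing K]

lemma solFreeConst_le {p q t : K} (ht : 0 ≤ t) (htp : t ≤ p) (htq : t ≤ q) (hp : p ≠ 0) :
    solFreeConst p q t ≤ 1 - t / (p + q) := by
  have hfactor : 1 ≤ (p ^ 2 + (p - t) * (q - t)) / p ^ 2 := by
    rw [le_div_iff₀ (by positivity)]
    nlinarith [mul_nonneg (sub_nonneg.2 htp) (sub_nonneg.2 htq)]
  have hratio : 0 ≤ t / (p + q) := div_nonneg ht (by linarith)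
  unfold solFreeConst
  nlinarith [mul_le_mul_of_nonneg_left hfactor hratio]

lemma half_lt_solFreeConst {p q t : K} (ht : 0 ≤ t) (h2t : 2 * t ≤ q) (hqp : q < p) :
    1 / 2 < solFreeConst p q t := by
  have hp : 0 < p := by linarith
  have hpt : 0 ≤ p - t := by linarith
  have hqt : 0 ≤ q - t := by linarith
  have hkey : 2 * t * ((p - t) * (q - t)) < p ^ 2 * (p + q - 2 * t) :=
    calc 2 * t * ((p - t) * (q - t)) ≤ q * ((p - t) * (q - t)) := by gcongr
      _ ≤ q * (p * q) := by gcongr <;> linarith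
      _ < p ^ 3 := by nlinarith [mul_lt_mul_of_pos_left hqp hp]
      _ ≤ p ^ 2 * (p + q - 2 * t) := by nlinarith [sq_nonneg p]
  unfold solFreeConst
  rw [← sub_pos]
  have hsum : 0 < p + q := by linarith
  have hdiff : 1 - t / (p + q) * ((p ^ 2 + (p - t) * (q - t)) / p ^ 2) - 1 / 2
      = (p ^ 2 * (p + q) - 2 * t * (p ^ 2 + (p - t) * (q - t))) / (2 * (p + q) * p ^ 2) := by
    field_simp
    ring
  rw [hdiff]
  exact div_pos (by linarith) (by positivity)

lemma half_le_div_add {p q : K} (hq : 0 < q) (hqp : q ≤ p) : 1 / 2 ≤ p / (p + q) := by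
  rw [le_div_iff₀ (by linarith)]
  linarith

end Field

lemma Nat.two_mul_gcd_le_of_not_dvd {p q : ℕ} (hq : 0 < q) (h : ¬ q ∣ p) :
    2 * Nat.gcd p q ≤ q := by
  obtain ⟨k, hk⟩ := Nat.gcd_dvd_right p q
  have hk0 : k ≠ 0 := by rintro rfl; omega
  have hk1 : k ≠ 1 := by
    rintro rfl
    exact h (by rw [mul_one] at hk; exact hk ▸ Nat.gcd_dvd_left p q)
  calc 2 * Nat.gcd p q ≤ Nat.gcd p q * k := by rw [mul_comm]; gcongr; omega
    _ = q := hk.symm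

/-- For `p ≥ q ≥ t` with `t = gcd(p,q)`, the constant
`C = 1 - (t/(p+q))·((p² + (p-t)(q-t))/p²)` satisfies `1/2 ≤ C ≤ 1 - t/(p+q)`;
moreover `C > 1/2` if `q ∤ p`, and `C = p/(p+q)` if `q ∣ p`. -/
theorem stmt10 (p q t : ℕ) (hqp : q ≤ p) (htq : t ≤ q) (htpos : 0 < t)
    (ht : t = Nat.gcd p q) :
    ∀ C : ℚ, C = 1 - ((t : ℚ) / ((p : ℚ) + q)) *
        (((p : ℚ) ^ 2 + ((p : ℚ) - t) * ((q : ℚ) - t)) / (p : ℚ) ^ 2) →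
      (1 / 2 : ℚ) ≤ C ∧ C ≤ 1 - (t : ℚ) / ((p : ℚ) + q) ∧
        (¬ q ∣ p → (1 / 2 : ℚ) < C) ∧ (q ∣ p → C = (p : ℚ) / ((p : ℚ) + q)) := by
  intro C hC
  replace hC : C = solFreeConst (p : ℚ) q t := hC
  subst hC
  have hq : 0 < q := htpos.trans_le htq
  have hqQ : (0 : ℚ) < q := by exact_mod_cast hq
  have hqpQ : (q : ℚ) ≤ p := by exact_mod_cast hqp
  have hpQ : (0 : ℚ) < p := hqQ.trans_le hqpQ
  have hdvd_eq : q ∣ p → solFreeConst (p : ℚ) q t = p / (p + q) := fun hdvd => by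
    rw [ht, Nat.gcd_eq_right hdvd]
    exact solFreeConst_self_right hpQ.ne' (by positivity)
  have hndvd_lt : ¬ q ∣ p → 1 / 2 < solFreeConst (p : ℚ) q t := fun hndvd => by
    have h2t : 2 * t ≤ q := ht ▸ Nat.two_mul_gcd_le_of_not_dvd hq hndvd
    have hqp' : q < p := hqp.lt_of_ne (by rintro rfl; exact hndvd dvd_rfl)
    exact half_lt_solFreeConst (by positivity) (by exact_mod_cast h2t) (by exact_mod_cast hqp')
  refine ⟨?_, ?_, hndvd_lt, hdvd_eq⟩
  · by_cases hdvd : q ∣ p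
    · exact (half_le_div_add hqQ hqpQ).trans_eq (hdvd_eq hdvd).symm
    · exact (hndvd_lt hdvd).le
  · have htp : t ≤ p := htq.trans hqp
    exact solFreeConst_le (by positivity) (by exact_mod_cast htp) (by exact_mod_cast htq)
      hpQ.ne'
end

section
/- Let L be a non-translation-invariant linear equation with integer coefficients and let B, S be disjoint L-free subsets of {1,...,n}. Define the link graph L_S[B] on vertex set B where x ≠ y are adjacent if there exists z ∈ S such that {x,y,z} (as a multiset, in some order) is a solution to L, and there is a loop at x if {x,x,z} or {x,z,z'} is a solution for some z, z' ∈ S. If I ⊆ B is such that S ∪ I is a maximal L-free subset of {1,...,n}, then I is a maximal independent set in L_S[B]. -/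
/-- `{x, y, z}` is (in some order) a solution to `a₁x₁ + a₂x₂ + a₃x₃ = b`. -/
def IsSolMulti (a₁ a₂ a₃ b : ℤ) (x y z : ℕ) : Prop :=
  a₁ * x + a₂ * y + a₃ * z = b ∨ a₁ * x + a₂ * z + a₃ * y = b ∨
  a₁ * y + a₂ * x + a₃ * z = b ∨ a₁ * y + a₂ * z + a₃ * x = b ∨
  a₁ * z + a₂ * x + a₃ * y = b ∨ a₁ * z + a₂ * y + a₃ * x = b

/-- `A` contains no solution to the equation `a₁x₁ + a₂x₂ + a₃x₃ = b`. -/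
def LFree (a₁ a₂ a₃ b : ℤ) (A : Finset ℕ) : Prop :=
  ∀ x ∈ A, ∀ y ∈ A, ∀ z ∈ A, a₁ * x + a₂ * y + a₃ * z ≠ b

/-- Distinct `x, y` are adjacent in the link graph `L_S[B]`. -/
def LinkAdj (a₁ a₂ a₃ b : ℤ) (S : Finset ℕ) (x y : ℕ) : Prop :=
  x ≠ y ∧ ∃ z ∈ S, IsSolMulti a₁ a₂ a₃ b x y z

/-- There is a loop at `x` in the link graph `L_S[B]`. -/
def LinkLoop (a₁ a₂ a₃ b : ℤ) (S : Finset ℕ) (x : ℕ) : Prop :=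
  (∃ z ∈ S, IsSolMulti a₁ a₂ a₃ b x x z) ∨
  (∃ z ∈ S, ∃ z' ∈ S, IsSolMulti a₁ a₂ a₃ b x z z')

/-- `I` is an independent set in the link graph `L_S[B]` (no looped vertex, no edge). -/
def LinkIndep (a₁ a₂ a₃ b : ℤ) (S I : Finset ℕ) : Prop :=
  (∀ x ∈ I, ¬ LinkLoop a₁ a₂ a₃ b S x) ∧
  ∀ x ∈ I, ∀ y ∈ I, ¬ LinkAdj a₁ a₂ a₃ b S x y

/-!
For `T ⊆ B`, a solution of `L` inside `S ∪ T` lies entirely in `S`, entirely in `B`, or mixes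
the two; since `S` and `B` are `L`-free only the mixed case remains, and a mixed solution is
precisely a loop (two entries in `S`) or an edge or loop (one entry in `S`) of the
link graph `L_S[B]` on `T`. Hence `S ∪ T` is `L`-free iff `T` is independent in `L_S[B]`, and
maximality of `S ∪ I` among `L`-free sets turns into maximality of `I` among independent sets.
-/

open Finset

variable {a₁ a₂ a₃ b : ℤ}

namespace IsSolMulti

variable {x y z : ℕ}

theorem swap (h : IsSolMulti a₁ a₂ a₃ b x y z) : IsSolMulti a₁ a₂ a₃ b y x z := by
  unfold IsSolMulti at *; tauto

theorem rotate (h : IsSolMulti a₁ a₂ a₃ b x y z) : IsSolMulti a₁ a₂ a₃ b y z x := by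
  unfold IsSolMulti at *; tauto

end IsSolMulti

theorem LFree.not_isSolMulti {A : Finset ℕ} (hA : LFree a₁ a₂ a₃ b A) {x y z : ℕ}
    (hx : x ∈ A) (hy : y ∈ A) (hz : z ∈ A) : ¬ IsSolMulti a₁ a₂ a₃ b x y z := by
  rintro (h | h | h | h | h | h)
  exacts [hA x hx y hy z hz h, hA x hx z hz y hy h, hA y hy x hx z hz h,
    hA y hy z hz x hx h, hA z hz x hx y hy h, hA z hz y hy x hx h]

namespace LinkIndep

variable {S T : Finset ℕ} {x y z : ℕ}

theorem not_isSolMulti_vertex_link_link (h : LinkIndep a₁ a₂ a₃ b S T)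
    (hx : x ∈ T) (hy : y ∈ S) (hz : z ∈ S) : ¬ IsSolMulti a₁ a₂ a₃ b x y z :=
  fun hsol => h.1 x hx (Or.inr ⟨y, hy, z, hz, hsol⟩)

theorem not_isSolMulti_vertex_vertex_link (h : LinkIndep a₁ a₂ a₃ b S T)
    (hx : x ∈ T) (hy : y ∈ T) (hz : z ∈ S) : ¬ IsSolMulti a₁ a₂ a₃ b x y z := by
  intro hsol
  obtain rfl | hne := eq_or_ne x y
  · exact h.1 x hx (Or.inl ⟨z, hz, hsol⟩)
  · exact h.2 x hx y hy ⟨hne, z, hz, hsol⟩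

end LinkIndep

theorem linkIndep_of_lFree_union {S T : Finset ℕ} (h : LFree a₁ a₂ a₃ b (S ∪ T)) :
    LinkIndep a₁ a₂ a₃ b S T := by
  refine ⟨?_, ?_⟩
  · rintro x hx (⟨z, hz, hsol⟩ | ⟨z, hz, z', hz', hsol⟩)
    · exact h.not_isSolMulti (mem_union_right _ hx) (mem_union_right _ hx)
        (mem_union_left _ hz) hsol
    · exact h.not_isSolMulti (mem_union_right _ hx) (mem_union_left _ hz)
        (mem_union_left _ hz') hsol
  · rintro x hx y hy ⟨-, z, hz, hsol⟩
    exact h.not_isSolMulti (mem_union_right _ hx) (mem_union_right _ hy)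
      (mem_union_left _ hz) hsol

theorem lFree_union_of_linkIndep {B S T : Finset ℕ} (hT : T ⊆ B)
    (hB : LFree a₁ a₂ a₃ b B) (hS : LFree a₁ a₂ a₃ b S) (h : LinkIndep a₁ a₂ a₃ b S T) :
    LFree a₁ a₂ a₃ b (S ∪ T) := by
  intro x hx y hy z hz heq
  have hsol : IsSolMulti a₁ a₂ a₃ b x y z := Or.inl heq
  rcases mem_union.1 hx with hx | hx <;> rcases mem_union.1 hy with hy | hy <;>
    rcases mem_union.1 hz with hz | hz
  · exact hS x hx y hy z hz heq
  · exact h.not_isSolMulti_vertex_link_link hz hx hy hsol.rotate.rotate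
  · exact h.not_isSolMulti_vertex_link_link hy hx hz hsol.swap
  · exact h.not_isSolMulti_vertex_vertex_link hy hz hx hsol.rotate
  · exact h.not_isSolMulti_vertex_link_link hx hy hz hsol
  · exact h.not_isSolMulti_vertex_vertex_link hx hz hy hsol.swap.rotate
  · exact h.not_isSolMulti_vertex_vertex_link hx hy hz hsol
  · exact hB x (hT hx) y (hT hy) z (hT hz) heq

theorem stmt12_general (a₁ a₂ a₃ b : ℤ)
    (n : ℕ) (B S I : Finset ℕ) (hB : B ⊆ Finset.Icc 1 n) (hS : S ⊆ Finset.Icc 1 n)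
    (hdisj : Disjoint B S) (hBfree : LFree a₁ a₂ a₃ b B) (hSfree : LFree a₁ a₂ a₃ b S)
    (hI : I ⊆ B) (hfree : LFree a₁ a₂ a₃ b (S ∪ I))
    (hmax : ∀ A : Finset ℕ, A ⊆ Finset.Icc 1 n → LFree a₁ a₂ a₃ b A →
      S ∪ I ⊆ A → A = S ∪ I) :
    LinkIndep a₁ a₂ a₃ b S I ∧
      ∀ v ∈ B, v ∉ I → ¬ LinkIndep a₁ a₂ a₃ b S (insert v I) := by
  refine ⟨linkIndep_of_lFree_union hfree, fun v hv hvI hindep => ?_⟩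
  have hvS : v ∉ S := disjoint_left.1 hdisj hv
  have hsub : insert v I ⊆ B := insert_subset hv hI
  have hext := hmax (S ∪ insert v I) (union_subset hS (hsub.trans hB))
    (lFree_union_of_linkIndep hsub hBfree hSfree hindep)
    (union_subset_union_right (subset_insert _ _))
  have hv' : v ∈ S ∪ I := hext ▸ mem_union_right _ (mem_insert_self _ _)
  exact (mem_union.1 hv').elim hvS hvI

/-- If `L` is not translation-invariant, `B, S` are disjoint `L`-free subsets of `[n]`,
and `I ⊆ B` is such that `S ∪ I` is a maximal `L`-free subset of `[n]`, then `I` is a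
maximal independent set in the link graph `L_S[B]`. -/
theorem stmt12 (a₁ a₂ a₃ b : ℤ) (hTI : ¬ (a₁ + a₂ + a₃ = 0 ∧ b = 0))
    (n : ℕ) (B S I : Finset ℕ) (hB : B ⊆ Finset.Icc 1 n) (hS : S ⊆ Finset.Icc 1 n)
    (hdisj : Disjoint B S) (hBfree : LFree a₁ a₂ a₃ b B) (hSfree : LFree a₁ a₂ a₃ b S)
    (hI : I ⊆ B) (hfree : LFree a₁ a₂ a₃ b (S ∪ I))
    (hmax : ∀ A : Finset ℕ, A ⊆ Finset.Icc 1 n → LFree a₁ a₂ a₃ b A →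
      S ∪ I ⊆ A → A = S ∪ I) :
    LinkIndep a₁ a₂ a₃ b S I ∧
      ∀ v ∈ B, v ∉ I → ¬ LinkIndep a₁ a₂ a₃ b S (insert v I) :=
  stmt12_general a₁ a₂ a₃ b n B S I hB hS hdisj hBfree hSfree hI hfree hmax
end

section
/- Let p ≥ q ≥ r be positive integers with gcd(p,q,r)=1 such that q divides p. Then for every L-free set S ⊆ {1,...,n} (for the equation px+qy=rz) with largest element M divisible by q (set M = 0 if no element of S is divisible by q), we have |S| ≤ ⌈(p+q−r)M/(p+q)⌉ + ⌈(n−M)(q−1)/q⌉. -/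
/-!
Write `p = q a` and `M = q m`. If `M ∈ S`, freeness at `z = M` says that no `x, y ∈ S` solve
`a x + y = r m`, so the reflection `x ↦ r m - a x` maps the elements of `S` in `(0, K]`,
`K = ⌊r M / (p + q)⌋ = ⌊r m / (a + 1)⌋`, injectively into `(K, M] \ S`; hence `S` has at most
`M - K` elements in `(0, M]`. Above `M` the set `S` contains no multiple of `q`, and `(M, n]`
contains exactly `⌊(n - M) / q⌋` of them since `q ∣ M`. The two ceilings in the bound are
`M - K` and `(n - M) - ⌊(n - M) / q⌋`.
-/

open Finset

theorem Int.ceil_natCast_mul_sub_div {k : Type*} [Field k] [LinearOrder k] [IsStrictOrderedRing k]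
    [FloorRing k] (m a : ℕ) {c : ℕ} (hc : c ≠ 0) :
    ⌈(m : k) * ((c : k) - a) / c⌉ = m - (a * m / c : ℕ) := by
  have hsplit : (m : k) * ((c : k) - a) / c = -(((a * m : ℕ) : k) / c) + m := by
    push_cast; field_simp; ring
  rw [hsplit, Int.ceil_add_natCast, Int.ceil_neg, Int.floor_div_natCast, Int.floor_natCast]
  push_cast
  ring

theorem Nat.Ioc_filter_dvd_card_of_dvd {q M : ℕ} (n : ℕ) (hqM : q ∣ M) :
    #{x ∈ Ioc M n | q ∣ x} = (n - M) / q := by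
  rcases le_or_gt M n with hMn | hnM
  · obtain ⟨d, rfl⟩ := Nat.exists_eq_add_of_le' hMn
    have hshift : Ioc M (d + M) = (Ioc 0 d).map (addRightEmbedding M) := by simp
    rw [Nat.add_sub_cancel, hshift, filter_map, card_map, ← Nat.Ioc_filter_dvd_card_eq_div]
    exact congrArg card (filter_congr fun x _ ↦ Nat.dvd_add_left hqM)
  · simp [Ioc_eq_empty_of_le hnM.le, Nat.sub_eq_zero_of_le hnM.le]

theorem card_inter_Ioc_add_div_le_of_not_dvd {q M : ℕ} (n : ℕ) {S : Finset ℕ} (hqM : q ∣ M)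
    (hS : ∀ x ∈ S, M < x → ¬ q ∣ x) :
    #(S ∩ Ioc M n) + (n - M) / q ≤ n - M := by
  have hsub : S ∩ Ioc M n ⊆ {x ∈ Ioc M n | ¬ q ∣ x} := fun x hx ↦ by
    rw [mem_inter, mem_Ioc] at hx
    exact mem_filter.mpr ⟨mem_Ioc.mpr hx.2, hS x hx.1 hx.2.1⟩
  have hsplit := card_filter_add_card_filter_not (s := Ioc M n) (p := (q ∣ ·))
  rw [Nat.card_Ioc, Nat.Ioc_filter_dvd_card_of_dvd n hqM] at hsplit
  have := card_le_card hsub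
  omega

theorem card_inter_Ioc_zero_add_div_le_of_forall_ne {a b M : ℕ} {S : Finset ℕ} (ha : 0 < a)
    (hbM : b ≤ M) (hfree : ∀ x ∈ S, ∀ y ∈ S, a * x + y ≠ b) :
    #(S ∩ Ioc 0 M) + b / (a + 1) ≤ M := by
  set K := b / (a + 1)
  have hK : (a + 1) * K ≤ b := Nat.mul_div_le b (a + 1)
  have hKM : K ≤ M := by nlinarith
  have hle : ∀ x ∈ S ∩ Ioc 0 K, a * x ≤ b := fun x hx ↦ by
    have := (mem_Ioc.mp (mem_inter.mp hx).2).2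
    nlinarith
  have hmaps : ∀ x ∈ S ∩ Ioc 0 K, b - a * x ∈ Ioc K M \ S := by
    intro x hx
    rw [mem_inter, mem_Ioc] at hx
    obtain ⟨hxS, -, hxK⟩ := hx
    have hlt : K + a * x < b := by
      rcases hxK.lt_or_eq with hxK | rfl
      · nlinarith
      · have := hfree K hxS K hxS
        lia
    refine mem_sdiff.mpr ⟨mem_Ioc.mpr ⟨by lia, by lia⟩, fun hyS ↦ hfree x hxS _ hyS ?_⟩
    lia
  have hinj : Set.InjOn (fun x ↦ b - a * x) (S ∩ Ioc 0 K : Finset ℕ) := by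
    intro x hx y hy hxy
    have := hle x hx
    have := hle y hy
    exact Nat.eq_of_mul_eq_mul_left ha (by simp only at hxy; lia)
  have hlow := card_le_card_of_injOn _ hmaps hinj
  have hcompl := card_sdiff_add_card_inter (Ioc K M) S
  rw [Nat.card_Ioc, inter_comm] at hcompl
  have hunion : S ∩ Ioc 0 M = S ∩ Ioc 0 K ∪ S ∩ Ioc K M := by
    rw [← inter_union_distrib_left, Ioc_union_Ioc_eq_Ioc (Nat.zero_le K) hKM]
  have := card_union_le (S ∩ Ioc 0 K) (S ∩ Ioc K M)
  rw [← hunion] at this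
  lia

theorem card_inter_Ioc_zero_add_div_le_of_dvd {p q r M : ℕ} {S : Finset ℕ} (hp : 0 < p)
    (hrq : r ≤ q) (hqp : q ∣ p) (hqM : q ∣ M) (hfree : ∀ x ∈ S, ∀ y ∈ S, p * x + q * y ≠ r * M) :
    #(S ∩ Ioc 0 M) + r * M / (p + q) ≤ M := by
  obtain ⟨a, rfl⟩ := hqp
  obtain ⟨m, rfl⟩ := hqM
  have hq : 0 < q := Nat.pos_of_mul_pos_right hp
  have hdiv : r * (q * m) / (q * a + q) = r * m / (a + 1) := by
    rw [mul_left_comm, ← mul_add_one, Nat.mul_div_mul_left _ _ hq]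
  rw [hdiv]
  refine card_inter_Ioc_zero_add_div_le_of_forall_ne (Nat.pos_of_mul_pos_left hp)
    (Nat.mul_le_mul_right m hrq) fun x hx y hy h ↦ hfree x hx y hy ?_
  rw [mul_left_comm r, ← h]
  ring

theorem stmt17_general (p q r n M : ℕ) (hqp : q ≤ p) (hrq : r ≤ q) (hr : 0 < r)
    (hdvd : q ∣ p)
    (S : Finset ℕ) (hS : S ⊆ Finset.Icc 1 n)
    (hfree : ∀ x ∈ S, ∀ y ∈ S, ∀ z ∈ S, p * x + q * y ≠ r * z)
    (hM : (M = 0 ∧ ∀ x ∈ S, ¬ q ∣ x) ∨ (M ∈ S ∧ q ∣ M ∧ ∀ x ∈ S, q ∣ x → x ≤ M)) :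
    (S.card : ℤ) ≤ ⌈(((p : ℚ) + q - r) * M) / ((p : ℚ) + q)⌉ +
      ⌈(((n : ℚ) - M) * ((q : ℚ) - 1)) / q⌉ := by
  have hq : 0 < q := hr.trans_le hrq
  have hMn : M ≤ n := by
    rcases hM with ⟨rfl, -⟩ | ⟨hMS, -⟩
    exacts [Nat.zero_le n, (mem_Icc.mp (hS hMS)).2]
  have hqM : q ∣ M := by
    rcases hM with ⟨rfl, -⟩ | ⟨-, hqM, -⟩
    exacts [dvd_zero q, hqM]
  have hsmall : #(S ∩ Ioc 0 M) + r * M / (p + q) ≤ M := by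
    rcases hM with ⟨rfl, -⟩ | ⟨hMS, -⟩
    · simp
    · exact card_inter_Ioc_zero_add_div_le_of_dvd (hq.trans_le hqp) hrq hdvd hqM
        fun x hx y hy ↦ hfree x hx y hy M hMS
  have hlarge : #(S ∩ Ioc M n) + (n - M) / q ≤ n - M := by
    refine card_inter_Ioc_add_div_le_of_not_dvd n hqM fun x hx hMx hqx ↦ ?_
    rcases hM with ⟨-, hS⟩ | ⟨-, -, hmax⟩
    exacts [hS x hx hqx, (hmax x hx hqx).not_gt hMx]
  have hsplit : #S ≤ #(S ∩ Ioc 0 M) + #(S ∩ Ioc M n) := by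
    have hcover : S ⊆ S ∩ Ioc 0 M ∪ S ∩ Ioc M n := by
      rw [← inter_union_distrib_left, Ioc_union_Ioc_eq_Ioc (Nat.zero_le M) hMn,
        ← Icc_add_one_left_eq_Ioc]
      exact subset_inter subset_rfl hS
    exact (card_le_card hcover).trans (card_union_le _ _)
  have hceil₁ := Int.ceil_natCast_mul_sub_div (k := ℚ) M r (c := p + q) (by lia)
  have hceil₂ := Int.ceil_natCast_mul_sub_div (k := ℚ) (n - M) 1 hq.ne'
  rw [Nat.cast_add] at hceil₁
  rw [Nat.cast_sub hMn, Nat.cast_one] at hceil₂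
  rw [mul_comm _ (M : ℚ), hceil₁, hceil₂, one_mul]
  lia

/-- If `q ∣ p` and `S ⊆ [n]` is free of solutions to `px + qy = rz`, with `M` the
largest element of `S` divisible by `q` (`M = 0` if there is none), then
`|S| ≤ ⌈(p+q-r)M/(p+q)⌉ + ⌈(n-M)(q-1)/q⌉`. -/
theorem stmt17 (p q r n M : ℕ) (hqp : q ≤ p) (hrq : r ≤ q) (hr : 0 < r)
    (hgcd : Nat.gcd (Nat.gcd p q) r = 1) (hdvd : q ∣ p)
    (S : Finset ℕ) (hS : S ⊆ Finset.Icc 1 n)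
    (hfree : ∀ x ∈ S, ∀ y ∈ S, ∀ z ∈ S, p * x + q * y ≠ r * z)
    (hM : (M = 0 ∧ ∀ x ∈ S, ¬ q ∣ x) ∨ (M ∈ S ∧ q ∣ M ∧ ∀ x ∈ S, q ∣ x → x ≤ M)) :
    (S.card : ℤ) ≤ ⌈(((p : ℚ) + q - r) * M) / ((p : ℚ) + q)⌉ +
      ⌈(((n : ℚ) - M) * ((q : ℚ) - 1)) / q⌉ :=
  stmt17_general p q r n M hqp hrq hr hdvd S hS hfree hM
end

section
/- Consider the equation L: 3x+2y=2z. The set A_n = {x ∈ {1,...,n} : x is odd, or x > 2n/3} contains no solution (x,y,z) ∈ A_n³ to 3x+2y=2z, i.e. A_n is L-free, and |A_n| = (2/3)n + O(1). -/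
lemma compl_card (n : ℕ) :
    ((Finset.Icc 1 n).filter (fun x => ¬(Odd x ∨ 2 * n < 3 * x))).card = n / 3 := by
  have h : (Finset.Icc 1 n).filter (fun x => ¬(Odd x ∨ 2 * n < 3 * x)) =
      (Finset.Icc 1 (n / 3)).image (fun k => 2 * k) := by
    ext x
    simp only [Finset.mem_filter, Finset.mem_Icc, Finset.mem_image, Nat.odd_iff,
      not_or, not_lt]
    constructor
    · rintro ⟨⟨h1, h2⟩, h3, h4⟩
      exact ⟨x / 2, by omega, by omega⟩
    · rintro ⟨k, ⟨hk1, hk2⟩, rfl⟩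
      omega
  rw [h, Finset.card_image_of_injective _ (fun a b h => by omega), Nat.card_Icc]
  omega

lemma main_card (n : ℕ) :
    ((Finset.Icc 1 n).filter (fun x => Odd x ∨ 2 * n < 3 * x)).card = n - n / 3 := by
  have h2 := compl_card n
  have := Finset.card_filter_add_card_filter_not
    (s := Finset.Icc 1 n) (p := fun x => Odd x ∨ 2 * n < 3 * x)
  rw [Nat.card_Icc] at this
  have hd : n / 3 ≤ n := Nat.div_le_self n 3
  omega

/-- For the equation `3x + 2y = 2z`, the set
`A_n = {x ∈ [n] : x odd or x > 2n/3}` contains no solution, and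
`|A_n| = (2/3)n + O(1)`. -/
theorem stmt19 : ∃ C : ℚ, ∀ n : ℕ,
    (∀ x ∈ (Finset.Icc 1 n).filter (fun x => Odd x ∨ 2 * n < 3 * x),
     ∀ y ∈ (Finset.Icc 1 n).filter (fun x => Odd x ∨ 2 * n < 3 * x),
     ∀ z ∈ (Finset.Icc 1 n).filter (fun x => Odd x ∨ 2 * n < 3 * x),
       3 * x + 2 * y ≠ 2 * z) ∧
    |(((Finset.Icc 1 n).filter (fun x => Odd x ∨ 2 * n < 3 * x)).card : ℚ) -
        2 * n / 3| ≤ C := by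
  refine ⟨1, fun n => ⟨?_, ?_⟩⟩
  · intro x hx y hy z hz
    simp only [Finset.mem_filter, Finset.mem_Icc, Nat.odd_iff] at hx hy hz
    omega
  · rw [main_card]
    have h1 : 3 * (n / 3) ≤ n := Nat.mul_div_le n 3
    have h2 : n ≤ 3 * (n / 3) + 2 := by omega
    have hd : n / 3 ≤ n := Nat.div_le_self n 3
    have h1' : 3 * ((n / 3 : ℕ) : ℚ) ≤ (n : ℚ) := by exact_mod_cast h1
    have h2' : (n : ℚ) ≤ 3 * ((n / 3 : ℕ) : ℚ) + 2 := by exact_mod_cast h2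
    rw [abs_le]
    push_cast [Nat.cast_sub hd]
    constructor <;> linarith
end
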